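/- arXiv:1311.6050 — 3 statements merged into one kernel-verified Lean document; each statement's English description precedes it below -/
import Mathlib

section
/- Suppose μA, μB, μAB ∈ [0,1] satisfy μAB ≤ min(μA, μB) and 1 − μA − μB + μAB ≥ 0. Then there exists a probability measure P on a finite sample space and events E_A, E_B such that P(E_A)=μA, P(E_B)=μB, and P(E_A ∩ E_B)=μAB. -/
/-!
Put the four atoms `E_A ∩ E_B`, `E_A ∩ E_Bᶜ`, `E_Aᶜ ∩ E_B`, `E_Aᶜ ∩ E_Bᶜ` on `Bool × Bool` with weights
`μAB`, `μA - μAB`, `μB - μAB`, `1 - μA - μB + μAB`. The two hypotheses say exactly that these weights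
are nonnegative, and they sum to `1`; summing them over `E_A`, `E_B` and `E_A ∩ E_B` returns
`μA`, `μB` and `μAB`.
-/

open MeasureTheory

theorem PMF.exists_toMeasure_toReal_eq_sum_indicator {α : Type*} [Fintype α] [MeasurableSpace α]
    [MeasurableSingletonClass α] (w : α → ℝ) (hw : ∀ a, 0 ≤ w a) (hsum : ∑ a, w a = 1) :
    ∃ p : PMF α, ∀ s : Set α, (p.toMeasure s).toReal = ∑ a, s.indicator w a := by
  have hsum' : ∑ a, ENNReal.ofReal (w a) = 1 := by
    rw [← ENNReal.ofReal_sum_of_nonneg fun a _ => hw a, hsum, ENNReal.ofReal_one]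
  refine ⟨PMF.ofFintype _ hsum', fun s => ?_⟩
  classical
  rw [PMF.toMeasure_apply_fintype, ENNReal.toReal_sum fun a _ => ?_]
  · refine Finset.sum_congr rfl fun a _ => ?_
    by_cases ha : a ∈ s <;> simp [ha, hw a]
  · by_cases ha : a ∈ s <;> simp [ha]

/-- The atom `(a, b)` stands for `E_A ∩ E_B` with `E_A` complemented iff `a = false`, and likewise `b`. -/
def conjunctionAtomWeight (μA μB μAB : ℝ) : Bool × Bool → ℝ
  | (true, true) => μAB
  | (true, false) => μA - μAB
  | (false, true) => μB - μAB
  | (false, false) => 1 - μA - μB + μAB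

section conjunctionAtomWeight

variable (μA μB μAB : ℝ)

theorem conjunctionAtomWeight_nonneg (hμAB : 0 ≤ μAB) (h1 : μAB ≤ min μA μB)
    (h2 : 0 ≤ 1 - μA - μB + μAB) : ∀ x, 0 ≤ conjunctionAtomWeight μA μB μAB x := by
  have hA : μAB ≤ μA := h1.trans (min_le_left _ _)
  have hB : μAB ≤ μB := h1.trans (min_le_right _ _)
  rintro ⟨_ | _, _ | _⟩ <;> simp only [conjunctionAtomWeight] <;> linarith

theorem sum_conjunctionAtomWeight : ∑ x, conjunctionAtomWeight μA μB μAB x = 1 := by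
  simp only [Fintype.sum_prod_type, Fintype.sum_bool, conjunctionAtomWeight]
  ring

theorem sum_indicator_fst_conjunctionAtomWeight :
    ∑ x, {x : Bool × Bool | x.1 = true}.indicator (conjunctionAtomWeight μA μB μAB) x = μA := by
  simp [Fintype.sum_prod_type, Set.indicator_apply, conjunctionAtomWeight]

theorem sum_indicator_snd_conjunctionAtomWeight :
    ∑ x, {x : Bool × Bool | x.2 = true}.indicator (conjunctionAtomWeight μA μB μAB) x = μB := by
  simp [Fintype.sum_prod_type, Set.indicator_apply, conjunctionAtomWeight]

theorem sum_indicator_inter_conjunctionAtomWeight :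
    ∑ x, ({x : Bool × Bool | x.1 = true} ∩ {x | x.2 = true}).indicator
      (conjunctionAtomWeight μA μB μAB) x = μAB := by
  simp [Fintype.sum_prod_type, Set.indicator_apply, conjunctionAtomWeight]

end conjunctionAtomWeight

theorem stmt_1_general (μA μB μAB : ℝ)
    (hμAB : 0 ≤ μAB ∧ μAB ≤ 1)
    (h1 : μAB ≤ min μA μB) (h2 : 0 ≤ 1 - μA - μB + μAB) :
    ∃ (Ω : Type) (_ : MeasurableSpace Ω) (_ : Finite Ω) (P : Measure Ω)
      (_ : IsProbabilityMeasure P) (EA EB : Set Ω),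
      (P EA).toReal = μA ∧ (P EB).toReal = μB ∧ (P (EA ∩ EB)).toReal = μAB := by
  obtain ⟨p, hp⟩ := PMF.exists_toMeasure_toReal_eq_sum_indicator (α := Bool × Bool) _
    (conjunctionAtomWeight_nonneg μA μB μAB hμAB.1 h1 h2) (sum_conjunctionAtomWeight μA μB μAB)
  refine ⟨Bool × Bool, inferInstance, inferInstance, p.toMeasure, inferInstance,
    {x | x.1 = true}, {x | x.2 = true}, ?_, ?_, ?_⟩
  · rw [hp, sum_indicator_fst_conjunctionAtomWeight]
  · rw [hp, sum_indicator_snd_conjunctionAtomWeight]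
  · rw [hp, sum_indicator_inter_conjunctionAtomWeight]

theorem stmt_1 (μA μB μAB : ℝ) (hμA : 0 ≤ μA ∧ μA ≤ 1) (hμB : 0 ≤ μB ∧ μB ≤ 1)
    (hμAB : 0 ≤ μAB ∧ μAB ≤ 1)
    (h1 : μAB ≤ min μA μB) (h2 : 0 ≤ 1 - μA - μB + μAB) :
    ∃ (Ω : Type) (_ : MeasurableSpace Ω) (_ : Finite Ω) (P : Measure Ω)
      (_ : IsProbabilityMeasure P) (EA EB : Set Ω),
      (P EA).toReal = μA ∧ (P EB).toReal = μB ∧ (P (EA ∩ EB)).toReal = μAB :=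
  stmt_1_general μA μB μAB hμAB h1 h2
end

section
/- Suppose μA, μB, μAB ∈ [0,1] satisfy max(μA, μB) ≤ μAB and μA + μB − μAB ≥ 0. Then there exists a probability measure P on a finite sample space and events E_A, E_B such that P(E_A)=μA, P(E_B)=μB, and P(E_A ∪ E_B)=μAB. -/
/-!
Realise the two concepts as the events "first coordinate true" and "second coordinate true" on the
four Venn cells `Bool × Bool`. The cell masses `μA + μB - μAB` (both), `μAB - μB` (only A),
`μAB - μA` (only B) and `1 - μAB` (neither) sum to one, and they are nonnegative exactly under the
two hypotheses `max μA μB ≤ μAB` and `0 ≤ μA + μB - μAB` (together with `μAB ≤ 1`).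
-/

open MeasureTheory

theorem exists_isProbabilityMeasure_toReal_apply_eq_sum_indicator {α : Type*} [Fintype α]
    [MeasurableSpace α] [MeasurableSingletonClass α] (w : α → ℝ) (hw : ∀ a, 0 ≤ w a)
    (hsum : ∑ a, w a = 1) :
    ∃ P : Measure α, IsProbabilityMeasure P ∧ ∀ s, (P s).toReal = ∑ a, s.indicator w a := by
  have hsum' : ∑ a, ENNReal.ofReal (w a) = 1 := by
    rw [← ENNReal.ofReal_sum_of_nonneg fun a _ => hw a, hsum, ENNReal.ofReal_one]
  refine ⟨(PMF.ofFintype _ hsum').toMeasure, inferInstance, fun s => ?_⟩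
  rw [PMF.toMeasure_apply_fintype, ENNReal.toReal_sum]
  · refine Finset.sum_congr rfl fun a _ => ?_
    by_cases ha : a ∈ s <;> simp [ha, hw a]
  · intro a _
    by_cases ha : a ∈ s <;> simp [ha]

def vennWeights (μA μB μAB : ℝ) : Bool × Bool → ℝ
  | (true, true) => μA + μB - μAB
  | (true, false) => μAB - μB
  | (false, true) => μAB - μA
  | (false, false) => 1 - μAB

theorem stmt_3_general (μA μB μAB : ℝ)
    (hμAB : 0 ≤ μAB ∧ μAB ≤ 1)
    (h1 : max μA μB ≤ μAB) (h2 : 0 ≤ μA + μB - μAB) :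
    ∃ (Ω : Type) (_ : MeasurableSpace Ω) (_ : Finite Ω) (P : Measure Ω)
      (_ : IsProbabilityMeasure P) (EA EB : Set Ω),
      (P EA).toReal = μA ∧ (P EB).toReal = μB ∧ (P (EA ∪ EB)).toReal = μAB := by
  obtain ⟨hA, hB⟩ := max_le_iff.mp h1
  have hw : ∀ ω, 0 ≤ vennWeights μA μB μAB ω := by
    rintro ⟨_ | _, _ | _⟩ <;> simp only [vennWeights] <;> linarith
  have hsum : ∑ ω, vennWeights μA μB μAB ω = 1 := by
    simp [Fintype.sum_prod_type, vennWeights]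
  obtain ⟨P, hP, hPs⟩ :=
    exists_isProbabilityMeasure_toReal_apply_eq_sum_indicator _ hw hsum
  refine ⟨Bool × Bool, inferInstance, inferInstance, P, hP, {ω | ω.1}, {ω | ω.2}, ?_, ?_, ?_⟩ <;>
    simp [hPs, Fintype.sum_prod_type, vennWeights]

theorem stmt_3 (μA μB μAB : ℝ) (hμA : 0 ≤ μA ∧ μA ≤ 1) (hμB : 0 ≤ μB ∧ μB ≤ 1)
    (hμAB : 0 ≤ μAB ∧ μAB ≤ 1)
    (h1 : max μA μB ≤ μAB) (h2 : 0 ≤ μA + μB - μAB) :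
    ∃ (Ω : Type) (_ : MeasurableSpace Ω) (_ : Finite Ω) (P : Measure Ω)
      (_ : IsProbabilityMeasure P) (EA EB : Set Ω),
      (P EA).toReal = μA ∧ (P EB).toReal = μB ∧ (P (EA ∪ EB)).toReal = μAB :=
  stmt_3_general μA μB μAB hμAB h1 h2
end

section
/- Not every data triple admits a Fock space representation with μA = 0.013, μA' = 0.947: there is no choice of m², n² ≥ 0 with m²+n²=1 and θ ∈ ℝ such that 0.658 = m²·(0.013)·(0.947) + n²·((0.013+0.947)/2 + √(0.013·0.947)·cos θ). -/
/-
Since `m² + n² = 1`, the Fock conjunction value is a convex combination of `μA μA'` and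
`(μA + μA')/2 + √(μA μA') cos θ`, so it never exceeds `max (μA μA') ((μA + μA')/2 + √(μA μA'))`.
For `μA = 0.013`, `μA' = 0.947` this bound is about `0.591 < 0.658`.
-/

theorem fock_conjunction_le_max {μ μ' m2 n2 : ℝ} (θ : ℝ) (hm : 0 ≤ m2) (hn : 0 ≤ n2)
    (hmn : m2 + n2 = 1) :
    m2 * (μ * μ') + n2 * ((μ + μ') / 2 + Real.sqrt (μ * μ') * Real.cos θ) ≤
      max (μ * μ') ((μ + μ') / 2 + Real.sqrt (μ * μ')) := by
  have hcos : Real.sqrt (μ * μ') * Real.cos θ ≤ Real.sqrt (μ * μ') :=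
    mul_le_of_le_one_right (Real.sqrt_nonneg _) (Real.cos_le_one θ)
  calc m2 * (μ * μ') + n2 * ((μ + μ') / 2 + Real.sqrt (μ * μ') * Real.cos θ)
      ≤ max (μ * μ') ((μ + μ') / 2 + Real.sqrt (μ * μ') * Real.cos θ) :=
        Convex.combo_le_max _ _ hm hn hmn
    _ ≤ max (μ * μ') ((μ + μ') / 2 + Real.sqrt (μ * μ')) := by gcongr

theorem stmt_16 :
    ¬ ∃ m2 n2 θ : ℝ, 0 ≤ m2 ∧ 0 ≤ n2 ∧ m2 + n2 = 1 ∧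
      (0.658 : ℝ) = m2 * (0.013 * 0.947) +
        n2 * ((0.013 + 0.947) / 2 + Real.sqrt (0.013 * 0.947) * Real.cos θ) := by
  rintro ⟨m2, n2, θ, hm, hn, hmn, heq⟩
  have hsqrt : Real.sqrt (0.013 * 0.947) < 0.12 := by
    rw [Real.sqrt_lt' (by norm_num)]; norm_num
  have hbound := heq ▸ fock_conjunction_le_max θ hm hn hmn
  rcases le_max_iff.mp hbound with h | h
  · norm_num at h
  · linarith
end
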